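/- arXiv:2506.06959 — 10 statements merged into one kernel-verified Lean document; each statement's English description precedes it below -/
import Mathlib

section
/- Let S be a finite nonempty type, A a finite nonempty type, T : S → A → S → ℝ with T s a s' ≥ 0 and ∑_{s'} T s a s' = 1 for all s, a, R : S → ℝ, and γ a real with 0 ≤ γ < 1. For every deterministic policy π : S → A there exists a unique function V_π : S → ℝ satisfying the Bellman equation V_π s = R s + γ * ∑_{s'} T s (π s) s' * V_π s' for all s ∈ S. -/
/-- Existence and uniqueness of the value function of a deterministic policy
in a finite discounted MDP (Bellman equation). -/
theorem exists_unique_value_function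
    {S A : Type*} [Fintype S] [Nonempty S] [Fintype A] [Nonempty A]
    (T : S → A → S → ℝ)
    (hT0 : ∀ s a s', 0 ≤ T s a s')
    (hT1 : ∀ s a, ∑ s', T s a s' = 1)
    (R : S → ℝ) (γ : ℝ) (hγ0 : 0 ≤ γ) (hγ1 : γ < 1)
    (π : S → A) :
    ∃! V : S → ℝ, ∀ s, V s = R s + γ * ∑ s', T s (π s) s' * V s' := by
  set f : (S → ℝ) → (S → ℝ) := fun V s => R s + γ * ∑ s', T s (π s) s' * V s' with hf
  have hdist : ∀ V W : S → ℝ, dist (f V) (f W) ≤ γ * dist V W := by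
    intro V W
    rw [dist_pi_le_iff (by positivity)]
    intro s
    have h1 : f V s - f W s = γ * ∑ s', T s (π s) s' * (V s' - W s') := by
      simp only [hf]
      have h2 : ∑ s', T s (π s) s' * (V s' - W s')
          = (∑ s', T s (π s) s' * V s') - ∑ s', T s (π s) s' * W s' := by
        rw [← Finset.sum_sub_distrib]
        exact Finset.sum_congr rfl fun x _ => mul_sub _ _ _
      rw [h2]; ring
    rw [Real.dist_eq, h1, abs_mul, abs_of_nonneg hγ0]
    gcongr
    calc |∑ s', T s (π s) s' * (V s' - W s')|
        ≤ ∑ s', |T s (π s) s' * (V s' - W s')| := Finset.abs_sum_le_sum_abs _ _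
      _ ≤ ∑ s', T s (π s) s' * dist V W := by
          apply Finset.sum_le_sum
          intro x _
          rw [abs_mul, abs_of_nonneg (hT0 _ _ _)]
          gcongr
          · exact hT0 _ _ _
          · rw [← Real.dist_eq]
            exact dist_le_pi_dist V W x
      _ = dist V W := by rw [← Finset.sum_mul, hT1, one_mul]
  have hK : (⟨γ, hγ0⟩ : NNReal) < 1 := by exact_mod_cast hγ1
  have hcontr : ContractingWith ⟨γ, hγ0⟩ f :=
    ⟨hK, LipschitzWith.of_dist_le_mul (by exact_mod_cast hdist)⟩
  refine ⟨hcontr.fixedPoint f, ?_, ?_⟩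
  · intro s
    exact (congrFun hcontr.fixedPoint_isFixedPt s).symm
  · intro W hW
    exact hcontr.fixedPoint_unique (funext fun s => (hW s).symm)
end

section
/- Let S be a finite nonempty type, P : Matrix S S ℝ a row-stochastic matrix (all entries nonnegative and each row summing to 1), and γ a real with 0 ≤ γ < 1. Then the matrix 1 − γ • P is invertible. Consequently, for any R : S → ℝ the linear policy-evaluation system V = R + γ • (P.mulVec V) has a unique solution V : S → ℝ. -/
/-- For a row-stochastic matrix `P` and discount `0 ≤ γ < 1`, the matrix `1 - γ • P`
is invertible; consequently the linear policy-evaluation system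
`V = R + γ • P.mulVec V` has a unique solution for every reward vector `R`. -/
theorem one_sub_discounted_stochastic_isUnit
    {S : Type*} [Fintype S] [Nonempty S] [DecidableEq S]
    (P : Matrix S S ℝ)
    (hP0 : ∀ s s', 0 ≤ P s s')
    (hP1 : ∀ s, ∑ s', P s s' = 1)
    (γ : ℝ) (hγ0 : 0 ≤ γ) (hγ1 : γ < 1) :
    IsUnit (1 - γ • P) ∧
    ∀ R : S → ℝ, ∃! V : S → ℝ, V = R + γ • P.mulVec V := by
  have hmv : ∀ V : S → ℝ, (1 - γ • P).mulVec V = V - γ • P.mulVec V := by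
    intro V
    rw [Matrix.sub_mulVec, Matrix.one_mulVec, Matrix.smul_mulVec]
  have hker : ∀ v : S → ℝ, (1 - γ • P).mulVec v = 0 → v = 0 := by
    intro v hv
    rw [hmv] at hv
    have hv' : v = γ • P.mulVec v := sub_eq_zero.mp hv
    obtain ⟨s, hs⟩ := Finite.exists_max (fun s => |v s|)
    have key : |v s| ≤ γ * |v s| := by
      calc |v s| = γ * |P.mulVec v s| := by
              conv_lhs => rw [hv']
              simp [abs_mul, abs_of_nonneg hγ0]
        _ ≤ γ * |v s| := by
            apply mul_le_mul_of_nonneg_left _ hγ0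
            calc |P.mulVec v s| ≤ ∑ s', |P s s' * v s'| := by
                  exact Finset.abs_sum_le_sum_abs _ _
              _ ≤ ∑ s', P s s' * |v s| := by
                  apply Finset.sum_le_sum
                  intro s' _
                  rw [abs_mul, abs_of_nonneg (hP0 s s')]
                  exact mul_le_mul_of_nonneg_left (hs s') (hP0 s s')
              _ = |v s| := by rw [← Finset.sum_mul, hP1, one_mul]
    have h0 : |v s| = 0 := by nlinarith [abs_nonneg (v s)]
    funext t
    have := hs t
    rw [h0] at this
    have := abs_nonneg (v t)
    simp only [Pi.zero_apply]
    have : |v t| = 0 := le_antisymm ‹|v t| ≤ 0› (abs_nonneg _)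
    exact abs_eq_zero.mp this
  have hinj : Function.Injective (1 - γ • P).mulVec := by
    intro a b hab
    have : (1 - γ • P).mulVec (a - b) = 0 := by
      rw [Matrix.mulVec_sub, hab, sub_self]
    have := hker _ this
    exact sub_eq_zero.mp this
  have hunit : IsUnit (1 - γ • P) := Matrix.mulVec_injective_iff_isUnit.mp hinj
  refine ⟨hunit, fun R => ?_⟩
  refine ⟨(1 - γ • P)⁻¹.mulVec R, ?_, ?_⟩
  · have h1 : (1 - γ • P).mulVec ((1 - γ • P)⁻¹.mulVec R) = R := by
      rw [Matrix.mulVec_mulVec, Matrix.mul_nonsing_inv _ ((Matrix.isUnit_iff_isUnit_det _).mp hunit), Matrix.one_mulVec]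
    rw [hmv] at h1
    exact sub_eq_iff_eq_add.mp h1
  · intro V hV
    have : (1 - γ • P).mulVec V = R := by
      rw [hmv]
      exact sub_eq_iff_eq_add.mpr hV
    rw [← this, Matrix.mulVec_mulVec, Matrix.nonsing_inv_mul _ ((Matrix.isUnit_iff_isUnit_det _).mp hunit), Matrix.one_mulVec]
end

section
/- Let S be a finite nonempty type, A a finite nonempty type, T : S → A → S → ℝ with T s a s' ≥ 0 and ∑_{s'} T s a s' = 1 for all s, a, R : S → ℝ, and γ a real with 0 ≤ γ < 1. Let π, π' : S → A be deterministic policies and let V_π, V_{π'} be the unique solutions of their respective Bellman equations. If for every state s we have R s + γ * ∑_{s'} T s (π' s) s' * V_π s' ≥ V_π s, then V_{π'} s ≥ V_π s for every state s (policy improvement: switching to actions with Q-value at least the current value does not decrease the value at any state). -/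
/-- Policy improvement: if at every state the action of `π'` has `Q`-value (under `Vπ`)
at least `Vπ`, then the value function of `π'` dominates that of `π` at every state. -/
theorem policy_improvement
    {S A : Type*} [Fintype S] [Nonempty S] [Fintype A] [Nonempty A]
    (T : S → A → S → ℝ)
    (hT0 : ∀ s a s', 0 ≤ T s a s')
    (hT1 : ∀ s a, ∑ s', T s a s' = 1)
    (R : S → ℝ) (γ : ℝ) (hγ0 : 0 ≤ γ) (hγ1 : γ < 1)
    (π π' : S → A) (Vπ Vπ' : S → ℝ)
    (hVπ : ∀ s, Vπ s = R s + γ * ∑ s', T s (π s) s' * Vπ s')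
    (hVπ' : ∀ s, Vπ' s = R s + γ * ∑ s', T s (π' s) s' * Vπ' s')
    (himp : ∀ s, R s + γ * ∑ s', T s (π' s) s' * Vπ s' ≥ Vπ s) :
    ∀ s, Vπ' s ≥ Vπ s := by
  set M : ℝ := Finset.univ.sup' Finset.univ_nonempty (fun s => Vπ s - Vπ' s) with hM
  have hle : ∀ s, Vπ s - Vπ' s ≤ M := fun s =>
    Finset.le_sup' (fun s => Vπ s - Vπ' s) (Finset.mem_univ s)
  obtain ⟨s0, -, hs0⟩ := Finset.exists_mem_eq_sup' (Finset.univ_nonempty (α := S))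
    (fun s => Vπ s - Vπ' s)
  have hMs0 : M = Vπ s0 - Vπ' s0 := hs0
  have key : M ≤ γ * M := by
    have h1 : Vπ s0 - Vπ' s0 ≤ γ * ∑ s', T s0 (π' s0) s' * (Vπ s' - Vπ' s') := by
      have expand : ∑ s', T s0 (π' s0) s' * (Vπ s' - Vπ' s')
          = (∑ s', T s0 (π' s0) s' * Vπ s') - ∑ s', T s0 (π' s0) s' * Vπ' s' := by
        rw [← Finset.sum_sub_distrib]; ring_nf
      rw [expand]; have h2 := himp s0; have h3 := hVπ' s0; nlinarith
    have h4 : ∑ s', T s0 (π' s0) s' * (Vπ s' - Vπ' s') ≤ M := by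
      calc ∑ s', T s0 (π' s0) s' * (Vπ s' - Vπ' s')
          ≤ ∑ s', T s0 (π' s0) s' * M :=
            Finset.sum_le_sum fun i _ => mul_le_mul_of_nonneg_left (hle i) (hT0 _ _ _)
        _ = M := by rw [← Finset.sum_mul, hT1, one_mul]
      
    calc M = Vπ s0 - Vπ' s0 := hMs0
      _ ≤ γ * ∑ s', T s0 (π' s0) s' * (Vπ s' - Vπ' s') := h1
      _ ≤ γ * M := mul_le_mul_of_nonneg_left h4 hγ0
  have hM0 : M ≤ 0 := by nlinarith
  intro s
  have := hle s
  linarith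
end

section
/- Let S be a finite nonempty type, A a finite nonempty type, T : S → A → S → ℝ with T s a s' ≥ 0 and ∑_{s'} T s a s' = 1 for all s, a, R : S → ℝ, and γ a real with 0 ≤ γ < 1. Let π : S → A be a deterministic policy with value function V_π, let t be a state and a an action with R t + γ * ∑_{s'} T t a s' * V_π s' > V_π t, and let π' = Function.update π t a be the policy obtained from π by switching the action at t to a. Then V_{π'} s ≥ V_π s for all states s and V_{π'} t > V_π t (strict single-state policy improvement). -/
/-- Strict single-state policy improvement: switching the action at one state `t` to an
action with strictly larger `Q`-value yields a policy whose value function dominates the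
old one everywhere, strictly at `t`. -/
theorem strict_single_state_policy_improvement
    {S A : Type*} [Fintype S] [Nonempty S] [DecidableEq S] [Fintype A] [Nonempty A]
    (T : S → A → S → ℝ)
    (hT0 : ∀ s a s', 0 ≤ T s a s')
    (hT1 : ∀ s a, ∑ s', T s a s' = 1)
    (R : S → ℝ) (γ : ℝ) (hγ0 : 0 ≤ γ) (hγ1 : γ < 1)
    (π : S → A) (Vπ : S → ℝ)
    (hVπ : ∀ s, Vπ s = R s + γ * ∑ s', T s (π s) s' * Vπ s')
    (t : S) (a : A)
    (hQ : R t + γ * ∑ s', T t a s' * Vπ s' > Vπ t)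
    (Vπ' : S → ℝ)
    (hVπ' : ∀ s, Vπ' s = R s + γ * ∑ s', T s (Function.update π t a s) s' * Vπ' s') :
    (∀ s, Vπ' s ≥ Vπ s) ∧ Vπ' t > Vπ t := by
  set π' := Function.update π t a with hπ'def
  -- advantage term
  have hΔ : ∀ s, 0 ≤ R s + γ * (∑ s', T s (π' s) s' * Vπ s') - Vπ s := by
    intro s
    by_cases hs : s = t
    · subst hs
      have : π' s = a := Function.update_self s a π
      rw [this]; linarith
    · have : π' s = π s := Function.update_of_ne hs a π
      rw [this]; linarith [hVπ s]
  have hΔt : 0 < R t + γ * (∑ s', T t (π' t) s' * Vπ s') - Vπ t := by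
    have : π' t = a := Function.update_self t a π
    rw [this]; linarith
  -- key recursion for the difference
  have key : ∀ s, Vπ' s - Vπ s
      = (R s + γ * (∑ s', T s (π' s) s' * Vπ s') - Vπ s)
        + γ * ∑ s', T s (π' s) s' * (Vπ' s' - Vπ s') := by
    intro s
    have hsum : ∑ s', T s (π' s) s' * (Vπ' s' - Vπ s')
        = (∑ s', T s (π' s) s' * Vπ' s') - ∑ s', T s (π' s) s' * Vπ s' := by
      rw [← Finset.sum_sub_distrib]
      exact Finset.sum_congr rfl fun s' _ => by ring
    rw [hsum, mul_sub]
    have := hVπ' s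
    linarith
  -- minimum of the difference
  obtain ⟨s0, -, hs0⟩ := Finset.exists_min_image Finset.univ
    (fun s => Vπ' s - Vπ s) Finset.univ_nonempty
  set m := Vπ' s0 - Vπ s0 with hm
  have hge : ∀ s, m ≤ Vπ' s - Vπ s := fun s => hs0 s (Finset.mem_univ s)
  have hmsum : ∀ s a', (∑ s', T s a' s' * m) ≤ ∑ s', T s a' s' * (Vπ' s' - Vπ s') :=
    fun s a' => Finset.sum_le_sum fun s' _ =>
      mul_le_mul_of_nonneg_left (hge s') (hT0 s a' s')
  have hconst : ∀ s a', (∑ s', T s a' s' * m) = m := by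
    intro s a'
    rw [← Finset.sum_mul, hT1, one_mul]
  have hm0 : 0 ≤ m := by
    have h1 := key s0
    have h2 := hmsum s0 (π' s0)
    rw [hconst s0 (π' s0)] at h2
    have h3 := hΔ s0
    nlinarith [mul_le_mul_of_nonneg_left h2 hγ0]
  have hall : ∀ s, Vπ' s ≥ Vπ s := fun s => by linarith [hge s]
  refine ⟨hall, ?_⟩
  have hsumnn : 0 ≤ ∑ s', T t (π' t) s' * (Vπ' s' - Vπ s') :=
    Finset.sum_nonneg fun s' _ =>
      mul_nonneg (hT0 t (π' t) s') (by linarith [hall s'])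
  have := key t
  nlinarith
end

section
/- Let S be a finite nonempty type, A a finite nonempty type, T : S → A → S → ℝ with T s a s' ≥ 0 and ∑_{s'} T s a s' = 1 for all s, a, R : S → ℝ, and γ a real with 0 ≤ γ < 1. Let C : S → Finset A assign a nonempty set of valid actions to each state. Suppose π : S → A satisfies π s ∈ C s for all s and its value function V_π satisfies the restricted Bellman optimality condition V_π s = max_{a ∈ C s} (R s + γ * ∑_{s'} T s a s' * V_π s') for every state s. Then for every deterministic policy π' with π' s ∈ C s for all s, we have V_{π'} s ≤ V_π s for all states s (restricted Bellman optimality implies optimality over all C-respecting policies). -/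
/-- Restricted Bellman optimality implies optimality over all policies respecting the
valid-action sets `C`. -/
theorem restricted_bellman_optimality
    {S A : Type*} [Fintype S] [Nonempty S] [Fintype A] [Nonempty A]
    (T : S → A → S → ℝ)
    (hT0 : ∀ s a s', 0 ≤ T s a s')
    (hT1 : ∀ s a, ∑ s', T s a s' = 1)
    (R : S → ℝ) (γ : ℝ) (hγ0 : 0 ≤ γ) (hγ1 : γ < 1)
    (C : S → Finset A) (hC : ∀ s, (C s).Nonempty)
    (π : S → A) (hπC : ∀ s, π s ∈ C s)
    (Vπ : S → ℝ)
    (hVπ : ∀ s, Vπ s = R s + γ * ∑ s', T s (π s) s' * Vπ s')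
    (hopt : ∀ s, Vπ s = (C s).sup' (hC s) fun a => R s + γ * ∑ s', T s a s' * Vπ s') :
    ∀ (π' : S → A), (∀ s, π' s ∈ C s) →
      ∀ (Vπ' : S → ℝ), (∀ s, Vπ' s = R s + γ * ∑ s', T s (π' s) s' * Vπ' s') →
        ∀ s, Vπ' s ≤ Vπ s := by
  intro π' hπ'C Vπ' hVπ' s
  -- M = max over states of (Vπ' - Vπ)
  obtain ⟨m, _, hm⟩ := Finset.exists_max_image (Finset.univ : Finset S)
    (fun s => Vπ' s - Vπ s) ⟨Classical.arbitrary S, Finset.mem_univ _⟩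
  set M := Vπ' m - Vπ m with hMdef
  have hmax : ∀ s, Vπ' s - Vπ s ≤ M := fun s => hm s (Finset.mem_univ s)
  -- key step: for every s, Vπ' s - Vπ s ≤ γ * M
  have key : ∀ s, Vπ' s - Vπ s ≤ γ * M := by
    intro s
    have h1 : R s + γ * ∑ s', T s (π' s) s' * Vπ s' ≤ Vπ s := by
      rw [hopt s]
      exact Finset.le_sup' (fun a => R s + γ * ∑ s', T s a s' * Vπ s') (hπ'C s)
    have h2 : Vπ' s - Vπ s ≤ γ * ∑ s', T s (π' s) s' * (Vπ' s' - Vπ s') := by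
      have := hVπ' s
      have expand : ∑ s', T s (π' s) s' * (Vπ' s' - Vπ s')
          = (∑ s', T s (π' s) s' * Vπ' s') - ∑ s', T s (π' s) s' * Vπ s' := by
        rw [← Finset.sum_sub_distrib]; congr 1; ext s'; ring
      nlinarith [h1]
    have h3 : ∑ s', T s (π' s) s' * (Vπ' s' - Vπ s') ≤ M := by
      calc ∑ s', T s (π' s) s' * (Vπ' s' - Vπ s')
          ≤ ∑ s', T s (π' s) s' * M := by
            apply Finset.sum_le_sum
            intro i _
            exact mul_le_mul_of_nonneg_left (hmax i) (hT0 s (π' s) i)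
        _ = M := by rw [← Finset.sum_mul, hT1]; ring
    calc Vπ' s - Vπ s ≤ γ * ∑ s', T s (π' s) s' * (Vπ' s' - Vπ s') := h2
      _ ≤ γ * M := mul_le_mul_of_nonneg_left h3 hγ0
  have hM : M ≤ γ * M := key m
  have hM0 : M ≤ 0 := by nlinarith
  have := hmax s
  linarith
end

section
/- Let S be a finite nonempty type, A a finite nonempty type, T : S → A → S → ℝ with T s a s' ≥ 0 and ∑_{s'} T s a s' = 1 for all s, a, R : S → ℝ, and γ a real with 0 ≤ γ < 1. Let C : S → Finset A assign a nonempty set of valid actions to each state. Suppose π : S → A satisfies π s ∈ C s for all s and V_π s = max_{a ∈ C s} (R s + γ * ∑_{s'} T s a s' * V_π s') for every state s. Then π is a local optimizer: for every state t and every action a ∈ C t, the single-state deviation π' = Function.update π t a satisfies V_{π'} s ≤ V_π s for all states s. -/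
/-- Restricted Bellman optimality implies local optimality: no single-state deviation
within the valid-action sets increases the value at any state. -/
theorem restricted_bellman_optimality_local
    {S A : Type*} [Fintype S] [Nonempty S] [DecidableEq S] [Fintype A] [Nonempty A]
    (T : S → A → S → ℝ)
    (hT0 : ∀ s a s', 0 ≤ T s a s')
    (hT1 : ∀ s a, ∑ s', T s a s' = 1)
    (R : S → ℝ) (γ : ℝ) (hγ0 : 0 ≤ γ) (hγ1 : γ < 1)
    (C : S → Finset A) (hC : ∀ s, (C s).Nonempty)
    (π : S → A) (hπC : ∀ s, π s ∈ C s)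
    (Vπ : S → ℝ)
    (hVπ : ∀ s, Vπ s = R s + γ * ∑ s', T s (π s) s' * Vπ s')
    (hopt : ∀ s, Vπ s = (C s).sup' (hC s) fun a => R s + γ * ∑ s', T s a s' * Vπ s') :
    ∀ (t : S), ∀ a ∈ C t,
      ∀ (Vπ' : S → ℝ),
        (∀ s, Vπ' s = R s + γ * ∑ s', T s (Function.update π t a s) s' * Vπ' s') →
        ∀ s, Vπ' s ≤ Vπ s := by
  intro t a ha Vπ' hVπ'
  set π' := Function.update π t a with hπ'
  have hπ'C : ∀ s, π' s ∈ C s := by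
    intro s
    by_cases hs : s = t
    · subst hs; simp [hπ', Function.update_self, ha]
    · simp [hπ', Function.update_of_ne hs, hπC s]
  -- value of Vπ dominates one-step with any valid action
  have hge : ∀ s, R s + γ * ∑ s', T s (π' s) s' * Vπ s' ≤ Vπ s := by
    intro s
    rw [hopt s]
    exact Finset.le_sup' (f := fun a => R s + γ * ∑ s', T s a s' * Vπ s') (hπ'C s)
  set M := Finset.univ.sup' Finset.univ_nonempty (fun s => Vπ' s - Vπ s) with hM
  have hle : ∀ s, Vπ' s - Vπ s ≤ M := fun s =>
    Finset.le_sup' (f := fun s => Vπ' s - Vπ s) (Finset.mem_univ s)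
  have key : M ≤ γ * M := by
    obtain ⟨s0, _, hs0⟩ := Finset.exists_mem_eq_sup' Finset.univ_nonempty
      (fun s => Vπ' s - Vπ s)
    have hMs0 : M = Vπ' s0 - Vπ s0 := by rw [hM, hs0]
    rw [hMs0]
    have h1 : Vπ' s0 - Vπ s0 ≤
        (R s0 + γ * ∑ s', T s0 (π' s0) s' * Vπ' s') -
        (R s0 + γ * ∑ s', T s0 (π' s0) s' * Vπ s') := by
      rw [← hVπ' s0]
      have := hge s0
      linarith
    have h2 : (R s0 + γ * ∑ s', T s0 (π' s0) s' * Vπ' s') -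
        (R s0 + γ * ∑ s', T s0 (π' s0) s' * Vπ s')
        = γ * ∑ s', T s0 (π' s0) s' * (Vπ' s' - Vπ s') := by
      have hd : ∑ s', T s0 (π' s0) s' * (Vπ' s' - Vπ s')
          = (∑ s', T s0 (π' s0) s' * Vπ' s') - ∑ s', T s0 (π' s0) s' * Vπ s' := by
        simp [mul_sub, Finset.sum_sub_distrib]
      rw [hd]; ring
    have h3 : ∑ s', T s0 (π' s0) s' * (Vπ' s' - Vπ s') ≤ M := by
      calc ∑ s', T s0 (π' s0) s' * (Vπ' s' - Vπ s')
          ≤ ∑ s', T s0 (π' s0) s' * M := by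
            apply Finset.sum_le_sum
            intro i _
            exact mul_le_mul_of_nonneg_left (hle i) (hT0 s0 (π' s0) i)
        _ = M := by rw [← Finset.sum_mul, hT1 s0 (π' s0), one_mul]
    calc Vπ' s0 - Vπ s0 ≤ γ * ∑ s', T s0 (π' s0) s' * (Vπ' s' - Vπ s') := by
          rw [← h2]; exact h1
      _ ≤ γ * M := mul_le_mul_of_nonneg_left h3 hγ0
      _ = γ * (Vπ' s0 - Vπ s0) := by rw [hMs0]
  have hM0 : M ≤ 0 := by nlinarith
  intro s
  have := hle s
  linarith
end

section
/- Let S be a finite nonempty type, P : S → S → ℝ with P s s' ≥ 0 and ∑_{s'} P s s' = 1 for all s (a finite Markov chain), and B ⊆ S a target set. Let S_no be the set of states s from which no element of B is reachable, where s' is reachable from s if (s,s') is in the reflexive-transitive closure of the relation {(u,v) : P u v > 0}. Then there is exactly one function x : S → ℝ satisfying: x s = 1 for s ∈ B; x s = 0 for s ∈ S_no; and x s = ∑_{s'} P s s' * x s' for s ∉ B ∪ S_no. Moreover this unique solution satisfies 0 ≤ x s ≤ 1 for all s. -/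
open Finset

theorem mc_max_principle
    {S : Type*} [Fintype S] [Nonempty S]
    (P : S → S → ℝ)
    (hP0 : ∀ s s', 0 ≤ P s s')
    (hP1 : ∀ s, ∑ s', P s s' = 1)
    (B : Set S)
    (d : S → ℝ)
    (hB : ∀ s ∈ B, d s ≤ 0)
    (hNo : ∀ s, (∀ b ∈ B, ¬ Relation.ReflTransGen (fun u v => 0 < P u v) s b) → d s ≤ 0)
    (heq : ∀ s, s ∉ B → ¬ (∀ b ∈ B, ¬ Relation.ReflTransGen (fun u v => 0 < P u v) s b) →
      d s = ∑ s', P s s' * d s') :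
    ∀ s, d s ≤ 0 := by
  by_contra hcon
  push_neg at hcon
  obtain ⟨t, ht⟩ := hcon
  obtain ⟨s₀, -, hmax⟩ := Finset.exists_max_image Finset.univ d ⟨t, Finset.mem_univ t⟩
  have hmax' : ∀ s, d s ≤ d s₀ := fun s => hmax s (Finset.mem_univ s)
  set M := d s₀ with hM
  have hMpos : 0 < M := lt_of_lt_of_le ht (hmax' t)
  have key : ∀ s, s ∉ B ∧ ¬ (∀ b ∈ B, ¬ Relation.ReflTransGen (fun u v => 0 < P u v) s b) ∨ d s < M := by
    intro s
    by_cases hsB : s ∈ B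
    · exact Or.inr (lt_of_le_of_lt (hB s hsB) hMpos)
    · by_cases hsN : ∀ b ∈ B, ¬ Relation.ReflTransGen (fun u v => 0 < P u v) s b
      · exact Or.inr (lt_of_le_of_lt (hNo s hsN) hMpos)
      · exact Or.inl ⟨hsB, hsN⟩
  have prop : ∀ s b, Relation.ReflTransGen (fun u v => 0 < P u v) s b → d s = M → d b = M := by
    intro s b h
    induction h using Relation.ReflTransGen.head_induction_on with
    | refl => exact fun h => h
    | head hstep hrest ih =>
      rename_i a' c'
      intro hda
      apply ih
      rcases key a' with hint | hlt
      · have heqa := heq a' hint.1 hint.2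
        by_contra hne
        have hdc : d c' < M := lt_of_le_of_ne (hmax' c') hne
        have hlt2 : ∑ s', P a' s' * d s' < ∑ s', P a' s' * M := by
          apply Finset.sum_lt_sum
          · intro i _
            exact mul_le_mul_of_nonneg_left (hmax' i) (hP0 a' i)
          · exact ⟨c', Finset.mem_univ c', mul_lt_mul_of_pos_left hdc hstep⟩
        rw [← Finset.sum_mul, hP1 a', one_mul] at hlt2
        rw [← heqa, hda] at hlt2
        exact lt_irrefl _ hlt2
      · rw [hda] at hlt; exact absurd hlt (lt_irrefl M)
  rcases key s₀ with hint | hlt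
  · push_neg at hint
    obtain ⟨b, hbB, hreach⟩ := hint.2
    have := prop s₀ b hreach rfl
    have := hB b hbB
    linarith
  · exact lt_irrefl M hlt

/-- Linear-system characterization of reachability probabilities in a finite Markov
chain: setting `x s = 1` on the target set `B`, `x s = 0` on the states from which `B`
is unreachable, and imposing the linear balance equation elsewhere determines a unique
vector `x`, and any such solution satisfies `0 ≤ x s ≤ 1` for all `s`. -/
theorem reachability_linear_system_unique
    {S : Type*} [Fintype S] [Nonempty S]
    (P : S → S → ℝ)
    (hP0 : ∀ s s', 0 ≤ P s s')
    (hP1 : ∀ s, ∑ s', P s s' = 1)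
    (B : Set S) :
    (∃! x : S → ℝ,
      (∀ s ∈ B, x s = 1) ∧
      (∀ s, (∀ b ∈ B, ¬ Relation.ReflTransGen (fun u v => 0 < P u v) s b) → x s = 0) ∧
      (∀ s, s ∉ B → ¬ (∀ b ∈ B, ¬ Relation.ReflTransGen (fun u v => 0 < P u v) s b) →
        x s = ∑ s', P s s' * x s')) ∧
    (∀ x : S → ℝ,
      ((∀ s ∈ B, x s = 1) ∧
       (∀ s, (∀ b ∈ B, ¬ Relation.ReflTransGen (fun u v => 0 < P u v) s b) → x s = 0) ∧
       (∀ s, s ∉ B → ¬ (∀ b ∈ B, ¬ Relation.ReflTransGen (fun u v => 0 < P u v) s b) →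
         x s = ∑ s', P s s' * x s')) →
      ∀ s, 0 ≤ x s ∧ x s ≤ 1) := by
  classical
  set No : S → Prop := fun s => ∀ b ∈ B, ¬ Relation.ReflTransGen (fun u v => 0 < P u v) s b
    with hNodef
  have hBnotNo : ∀ s ∈ B, ¬ No s := fun s hs hno => hno s hs Relation.ReflTransGen.refl
  set p : S → Prop := fun s => s ∉ B ∧ ¬ No s with hpdef
  -- uniqueness-style auxiliary: any solution of the homogeneous comparison system is ≤ 0
  have MP := mc_max_principle P hP0 hP1 B
  -- the matrix of the system on interior states
  set A : Matrix {s // p s} {s // p s} ℝ :=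
    fun i j => (if i = j then 1 else 0) - P i.1 j.1 with hAdef
  have hAmul : ∀ (u : {s' // p s'} → ℝ) (i : {s' // p s'}),
      A.mulVec u i = u i - ∑ j, P i.1 j.1 * u j := by
    intro u i
    simp only [Matrix.mulVec, dotProduct, hAdef, sub_mul, ite_mul, one_mul, zero_mul,
      Finset.sum_sub_distrib, Finset.sum_ite_eq, Finset.mem_univ, if_true]
  -- summing a function supported on interior states
  have hsumI : ∀ (s : S) (w : {s' // p s'} → ℝ),
      ∑ s', P s s' * (if h : p s' then w ⟨s', h⟩ else 0) = ∑ j, P s j.1 * w j := by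
    intro s w
    rw [← Finset.sum_filter_of_ne
        (f := fun s' => P s s' * (if h : p s' then w ⟨s', h⟩ else 0)) (p := p)
        (fun x _ hne => by
          by_contra hp; exact hne (by simp only [dif_neg hp, mul_zero])),
      Finset.sum_subtype (p := p) (Finset.univ.filter p) (fun x => by simp)
        (fun s' => P s s' * (if h : p s' then w ⟨s', h⟩ else 0))]
    exact Finset.sum_congr rfl fun j _ => by rw [dif_pos j.2]
  -- summing against the indicator of B
  have hsumB : ∀ s : S, ∑ s', P s s' * (if s' ∈ B then (1:ℝ) else 0)
      = ∑ s' ∈ Finset.univ.filter (· ∈ B), P s s' := by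
    intro s
    rw [Finset.sum_filter]
    exact Finset.sum_congr rfl fun j _ => by split <;> simp
  -- injectivity of the system matrix
  have hinj : Function.Injective A.mulVecLin := by
    rw [injective_iff_map_eq_zero]
    intro u hu
    have hu' : ∀ i, u i = ∑ j, P i.1 j.1 * u j := by
      intro i
      have := congrFun hu i
      rw [Matrix.mulVecLin_apply] at this
      rw [hAmul u i] at this
      simpa [sub_eq_zero] using this
    set d : S → ℝ := fun s => if h : p s then u ⟨s, h⟩ else 0 with hddef
    have hd0 : ∀ s ∈ B, d s = 0 := fun s hs => by
      simp only [hddef]; rw [dif_neg]; exact fun h => h.1 hs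
    have hdN : ∀ s, No s → d s = 0 := fun s hs => by
      simp only [hddef]; rw [dif_neg]; exact fun h => h.2 hs
    have hde : ∀ s, s ∉ B → ¬ No s → d s = ∑ s', P s s' * d s' := by
      intro s hsB hsN
      have hps : p s := ⟨hsB, hsN⟩
      simp only [hddef]
      rw [dif_pos hps, hsumI s u]
      exact hu' ⟨s, hps⟩
    have h1 : ∀ s, d s ≤ 0 :=
      MP d (fun s hs => le_of_eq (hd0 s hs)) (fun s hs => le_of_eq (hdN s hs)) hde
    have h2 : ∀ s, -d s ≤ 0 := by
      refine MP (fun s => -d s) (fun s hs => by show -d s ≤ 0; rw [hd0 s hs]; simp)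
        (fun s hs => by show -d s ≤ 0; rw [hdN s hs]; simp) ?_
      intro s hsB hsN
      show -d s = ∑ s', P s s' * -d s'
      rw [hde s hsB hsN, ← Finset.sum_neg_distrib]
      exact Finset.sum_congr rfl fun j _ => (mul_neg _ _).symm
    have hdz : ∀ s, d s = 0 := fun s => le_antisymm (h1 s) (by linarith [h2 s])
    funext i
    have := hdz i.1
    simp only [hddef] at this
    rw [dif_pos i.2] at this
    simpa using this
  -- existence of the interior solution
  have hsurj : Function.Surjective A.mulVecLin :=
    (LinearMap.injective_iff_surjective).mp hinj
  obtain ⟨u, hu⟩ := hsurj (fun i => ∑ s' ∈ Finset.univ.filter (· ∈ B), P i.1 s')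
  have huEq : ∀ i : {s' // p s'},
      u i = (∑ s' ∈ Finset.univ.filter (· ∈ B), P i.1 s') + ∑ j, P i.1 j.1 * u j := by
    intro i
    have := congrFun hu i
    rw [Matrix.mulVecLin_apply, hAmul u i] at this
    linarith [this]
  -- the candidate solution
  set x : S → ℝ := fun s => if s ∈ B then 1 else if h : p s then u ⟨s, h⟩ else 0 with hxdef
  have hx1 : ∀ s ∈ B, x s = 1 := fun s hs => by simp only [hxdef]; rw [if_pos hs]
  have hx0 : ∀ s, No s → x s = 0 := by
    intro s hs
    simp only [hxdef]
    rw [if_neg (fun hB' => hBnotNo s hB' hs), dif_neg (fun h => h.2 hs)]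
  have hxdec : ∀ s', x s' = (if s' ∈ B then (1:ℝ) else 0) + (if h : p s' then u ⟨s', h⟩ else 0) := by
    intro s'
    by_cases hB' : s' ∈ B
    · rw [hx1 s' hB', if_pos hB', dif_neg (fun h => h.1 hB')]; ring
    · simp only [hxdef]
      rw [if_neg hB', if_neg hB', zero_add]
  have hxe : ∀ s, s ∉ B → ¬ No s → x s = ∑ s', P s s' * x s' := by
    intro s hsB hsN
    have hps : p s := ⟨hsB, hsN⟩
    have hrhs : ∑ s', P s s' * x s'
        = (∑ s' ∈ Finset.univ.filter (· ∈ B), P s s') + ∑ j, P s j.1 * u j := by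
      calc ∑ s', P s s' * x s'
          = ∑ s', (P s s' * (if s' ∈ B then (1:ℝ) else 0)
              + P s s' * (if h : p s' then u ⟨s', h⟩ else 0)) := by
            exact Finset.sum_congr rfl fun s' _ => by rw [hxdec s', mul_add]
        _ = (∑ s' ∈ Finset.univ.filter (· ∈ B), P s s') + ∑ j, P s j.1 * u j := by
            rw [Finset.sum_add_distrib, hsumB s, hsumI s u]
    rw [hrhs]
    have : x s = u ⟨s, hps⟩ := by simp only [hxdef]; rw [if_neg hsB, dif_pos hps]
    rw [this]
    exact huEq ⟨s, hps⟩
  -- uniqueness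
  have huniq : ∀ y : S → ℝ,
      ((∀ s ∈ B, y s = 1) ∧ (∀ s, No s → y s = 0) ∧
        (∀ s, s ∉ B → ¬ No s → y s = ∑ s', P s s' * y s')) → y = x := by
    intro y ⟨hy1, hy0, hye⟩
    have hdiff : ∀ (z w : S → ℝ), (∀ s ∈ B, z s = 1) → (∀ s, No s → z s = 0) →
        (∀ s, s ∉ B → ¬ No s → z s = ∑ s', P s s' * z s') →
        (∀ s ∈ B, w s = 1) → (∀ s, No s → w s = 0) →
        (∀ s, s ∉ B → ¬ No s → w s = ∑ s', P s s' * w s') →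
        ∀ s, z s - w s ≤ 0 := by
      intro z w hz1 hz0 hze hw1 hw0 hwe
      refine MP (fun s => z s - w s)
        (fun s hs => by show z s - w s ≤ 0; rw [hz1 s hs, hw1 s hs]; simp)
        (fun s hs => by show z s - w s ≤ 0; rw [hz0 s hs, hw0 s hs]; simp) ?_
      intro s hsB hsN
      show z s - w s = ∑ s', P s s' * (z s' - w s')
      rw [hze s hsB hsN, hwe s hsB hsN, ← Finset.sum_sub_distrib]
      exact Finset.sum_congr rfl fun j _ => (mul_sub _ _ _).symm
    funext s
    have h1 := hdiff y x hy1 hy0 hye hx1 hx0 hxe s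
    have h2 := hdiff x y hx1 hx0 hxe hy1 hy0 hye s
    linarith
  -- bounds
  have hbound : ∀ y : S → ℝ,
      ((∀ s ∈ B, y s = 1) ∧ (∀ s, No s → y s = 0) ∧
        (∀ s, s ∉ B → ¬ No s → y s = ∑ s', P s s' * y s')) →
      ∀ s, 0 ≤ y s ∧ y s ≤ 1 := by
    intro y ⟨hy1, hy0, hye⟩ s
    have hup : ∀ s, y s - 1 ≤ 0 := by
      refine MP (fun s => y s - 1)
        (fun s hs => by show y s - 1 ≤ 0; rw [hy1 s hs]; simp)
        (fun s hs => by show y s - 1 ≤ 0; rw [hy0 s hs]; norm_num) ?_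
      intro s hsB hsN
      show y s - 1 = ∑ s', P s s' * (y s' - 1)
      rw [hye s hsB hsN]
      have : (1 : ℝ) = ∑ s', P s s' * 1 := by simp [hP1 s]
      nth_rewrite 1 [this]
      rw [← Finset.sum_sub_distrib]
      exact Finset.sum_congr rfl fun j _ => (mul_sub _ _ _).symm
    have hlo : ∀ s, -y s ≤ 0 := by
      refine MP (fun s => -y s)
        (fun s hs => by show -y s ≤ 0; rw [hy1 s hs]; norm_num)
        (fun s hs => by show -y s ≤ 0; rw [hy0 s hs]; simp) ?_
      intro s hsB hsN
      show -y s = ∑ s', P s s' * -y s'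
      rw [hye s hsB hsN, ← Finset.sum_neg_distrib]
      exact Finset.sum_congr rfl fun j _ => (mul_neg _ _).symm
    exact ⟨by linarith [hlo s], by linarith [hup s]⟩
  exact ⟨⟨x, ⟨hx1, hx0, hxe⟩, huniq⟩, hbound⟩
end

section
/- Let S be a finite nonempty type, P : S → S → ℝ with P s s' ≥ 0 and ∑_{s'} P s s' = 1 for all s, and B ⊆ S. Let F be the monotone operator on functions S → [0,1] defined by (F x) s = 1 if s ∈ B and (F x) s = ∑_{s'} P s s' * x s' otherwise, and let x* be its least fixed point. Then for every state s, x* s = 0 if and only if no element of B is reachable from s, where s' is reachable from s if (s,s') is in the reflexive-transitive closure of the relation {(u,v) : P u v > 0} (correctness of the Prob0 computation). -/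
/-- Correctness of the Prob0 computation: the least fixed point `x*` (over `[0,1]`-valued
vectors) of the reachability operator of a finite Markov chain vanishes at `s` iff no
target state in `B` is reachable from `s`. -/
theorem prob0_correct
    {S : Type*} [Fintype S] [Nonempty S]
    (P : S → S → ℝ)
    (hP0 : ∀ s s', 0 ≤ P s s')
    (hP1 : ∀ s, ∑ s', P s s' = 1)
    (B : Set S) [DecidablePred (· ∈ B)]
    (xstar : S → ℝ)
    (hx_mem : ∀ s, xstar s ∈ Set.Icc (0 : ℝ) 1)
    (hx_fix : ∀ s, xstar s = if s ∈ B then 1 else ∑ s', P s s' * xstar s')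
    (hx_least : ∀ x : S → ℝ, (∀ s, x s ∈ Set.Icc (0 : ℝ) 1) →
      (∀ s, x s = if s ∈ B then 1 else ∑ s', P s s' * x s') →
      ∀ s, xstar s ≤ x s) :
    ∀ s, xstar s = 0 ↔ ∀ b ∈ B, ¬ Relation.ReflTransGen (fun u v => 0 < P u v) s b := by
  classical
  -- the Kleene iterates
  set F : (S → ℝ) → (S → ℝ) :=
    fun x s => if s ∈ B then 1 else ∑ s', P s s' * x s' with hF
  set a : ℕ → S → ℝ := fun n => F^[n] (fun _ => 0) with ha
  have ha_succ : ∀ n, a (n + 1) = F (a n) := by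
    intro n
    simp [ha, Function.iterate_succ_apply']
  -- iterates lie in [0,1]
  have h01 : ∀ n s, a n s ∈ Set.Icc (0 : ℝ) 1 := by
    intro n
    induction n with
    | zero => intro s; simp [ha]
    | succ n ih =>
      intro s
      rw [ha_succ]
      by_cases hs : s ∈ B
      · simp [hF, hs]
      · simp only [hF, hs, if_false]
        constructor
        · exact Finset.sum_nonneg fun s' _ =>
            mul_nonneg (hP0 s s') (ih s').1
        · calc ∑ s', P s s' * a n s' ≤ ∑ s', P s s' * 1 :=
                Finset.sum_le_sum fun s' _ =>
                  mul_le_mul_of_nonneg_left (ih s').2 (hP0 s s')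
            _ = 1 := by simpa using hP1 s
  -- monotonicity in n
  have hmono : ∀ s, Monotone fun n => a n s := by
    intro s
    apply monotone_nat_of_le_succ
    intro n
    induction n generalizing s with
    | zero => simpa [ha] using (h01 1 s).1
    | succ n ih =>
      rw [ha_succ, ha_succ]
      by_cases hs : s ∈ B
      · simp [hF, hs]
      · simp only [hF, hs, if_false]
        exact Finset.sum_le_sum fun s' _ =>
          mul_le_mul_of_nonneg_left (ih s') (hP0 s s')
  have hbdd : ∀ s, BddAbove (Set.range fun n => a n s) := by
    intro s
    exact ⟨1, by rintro x ⟨n, rfl⟩; exact (h01 n s).2⟩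
  set L : S → ℝ := fun s => ⨆ n, a n s with hL
  have htend : ∀ s, Filter.Tendsto (fun n => a n s) Filter.atTop (nhds (L s)) := by
    intro s
    exact tendsto_atTop_ciSup (hmono s) (hbdd s)
  have hL01 : ∀ s, L s ∈ Set.Icc (0 : ℝ) 1 := by
    intro s
    constructor
    · exact le_trans (h01 0 s).1 (le_ciSup (hbdd s) 0)
    · exact ciSup_le fun n => (h01 n s).2
  -- L is a fixpoint
  have hLfix : ∀ s, L s = if s ∈ B then 1 else ∑ s', P s s' * L s' := by
    intro s
    by_cases hs : s ∈ B
    · simp only [hs, if_true]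
      apply le_antisymm (hL01 s).2
      have : a 1 s = 1 := by
        rw [show (1 : ℕ) = 0 + 1 from rfl, ha_succ]
        simp [hF, hs]
      calc (1 : ℝ) = a 1 s := this.symm
        _ ≤ L s := le_ciSup (hbdd s) 1
    · simp only [hs, if_false]
      have h1 : Filter.Tendsto (fun n => a (n + 1) s) Filter.atTop (nhds (L s)) :=
        (htend s).comp (Filter.tendsto_add_atTop_nat 1)
      have h2 : Filter.Tendsto (fun n => ∑ s', P s s' * a n s') Filter.atTop
          (nhds (∑ s', P s s' * L s')) := by
        apply tendsto_finset_sum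
        intro s' _
        exact (htend s').const_mul (P s s')
      have heq : (fun n => a (n + 1) s) = fun n => ∑ s', P s s' * a n s' := by
        funext n
        rw [ha_succ]
        simp [hF, hs]
      rw [heq] at h1
      exact tendsto_nhds_unique h1 h2
  intro s
  constructor
  · -- forward: xstar s = 0 → no reachable target
    intro hs0 b hb hreach
    have key : ∀ t, Relation.ReflTransGen (fun u v => 0 < P u v) t b →
        xstar t = 0 → False := by
      intro t ht
      induction ht using Relation.ReflTransGen.head_induction_on with
      | refl =>
        intro h0
        rw [hx_fix b, if_pos hb] at h0
        norm_num at h0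
      | head hstep _ ih =>
        rename_i u v _
        intro h0
        have hu : u ∉ B := by
          intro hu
          rw [hx_fix u, if_pos hu] at h0
          norm_num at h0
        rw [hx_fix u, if_neg hu] at h0
        have hterm : ∀ s' ∈ Finset.univ, (0:ℝ) ≤ P u s' * xstar s' :=
          fun s' _ => mul_nonneg (hP0 u s') (hx_mem s').1
        have := (Finset.sum_eq_zero_iff_of_nonneg hterm).1 (by linarith) v (Finset.mem_univ v)
        have hv0 : xstar v = 0 := by
          rcases mul_eq_zero.1 this with h | h
          · exact absurd h (ne_of_gt hstep)
          · exact h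
        exact ih hv0
    exact key s hreach hs0
  · -- backward: no reachable target → xstar s = 0
    intro hnr
    have hle := hx_least L hL01 hLfix s
    have hLz : L s = 0 := by
      have han : ∀ n t, (∀ b ∈ B, ¬ Relation.ReflTransGen (fun u v => 0 < P u v) t b) →
          a n t = 0 := by
        intro n
        induction n with
        | zero => intro t _; simp [ha]
        | succ n ih =>
          intro t ht
          have htB : t ∉ B := fun h => ht t h Relation.ReflTransGen.refl
          rw [ha_succ]
          simp only [hF, htB, if_false]
          apply Finset.sum_eq_zero
          intro s' _
          by_cases hp : 0 < P t s'
          · have hs' : ∀ b ∈ B, ¬ Relation.ReflTransGen (fun u v => 0 < P u v) s' b := by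
              intro b hb hr
              exact ht b hb (Relation.ReflTransGen.head hp hr)
            rw [ih s' hs', mul_zero]
          · have : P t s' = 0 := le_antisymm (not_lt.1 hp) (hP0 t s')
            rw [this, zero_mul]
      have : ∀ n, a n s = 0 := fun n => han n s hnr
      simp only [hL, this, ciSup_const]
    rw [hLz] at hle
    exact le_antisymm hle (hx_mem s).1
end

section
/- Let S be a finite nonempty type, A a finite nonempty type, T : S → A → S → ℝ with T s a s' ≥ 0 and ∑_{s'} T s a s' = 1 for all s, a, R : S → ℝ, and γ a real with 0 ≤ γ < 1. Let C : S → Finset A assign a nonempty set of valid actions to each state, and let V*_C be the unique fixed point of the restricted optimal Bellman operator (T*_C V)(s) = R s + γ * max_{a ∈ C s} ∑_{s'} T s a s' * V s'. Then there exists a deterministic policy π* with π* s ∈ C s for all s whose value function equals V*_C, i.e. V_{π*} = V*_C; consequently V_{π*} s ≥ V_{π'} s for every state s and every policy π' with π' s ∈ C s for all s (existence of a simultaneously optimal deterministic policy within the restricted policy class). -/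
/-- Existence of a simultaneously optimal deterministic policy within the restricted
(`C`-respecting) policy class: the unique fixed point `V*_C` of the restricted optimal
Bellman operator is the value function of some `C`-respecting policy `π*`, and it
dominates the value function of every `C`-respecting policy at every state. -/
theorem exists_restricted_optimal_policy
    {S A : Type*} [Fintype S] [Nonempty S] [Fintype A] [Nonempty A]
    (T : S → A → S → ℝ)
    (hT0 : ∀ s a s', 0 ≤ T s a s')
    (hT1 : ∀ s a, ∑ s', T s a s' = 1)
    (R : S → ℝ) (γ : ℝ) (hγ0 : 0 ≤ γ) (hγ1 : γ < 1)
    (C : S → Finset A) (hC : ∀ s, (C s).Nonempty)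
    (Vstar : S → ℝ)
    (hVstar : ∀ s, Vstar s = R s + γ * (C s).sup' (hC s) fun a => ∑ s', T s a s' * Vstar s') :
    ∃ πstar : S → A,
      (∀ s, πstar s ∈ C s) ∧
      (∀ s, Vstar s = R s + γ * ∑ s', T s (πstar s) s' * Vstar s') ∧
      (∀ π' : S → A, (∀ s, π' s ∈ C s) →
        ∀ Vπ' : S → ℝ, (∀ s, Vπ' s = R s + γ * ∑ s', T s (π' s) s' * Vπ' s') →
          ∀ s, Vstar s ≥ Vπ' s) := by
  -- choose the argmax action in each state
  have hchoice : ∀ s, ∃ a ∈ C s,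
      ((C s).sup' (hC s) fun a => ∑ s', T s a s' * Vstar s')
        = ∑ s', T s a s' * Vstar s' := by
    intro s
    obtain ⟨a, ha, hmax⟩ := Finset.exists_mem_eq_sup' (hC s)
      (fun a => ∑ s', T s a s' * Vstar s')
    exact ⟨a, ha, hmax⟩
  choose πstar hπC hπeq using hchoice
  refine ⟨πstar, hπC, ?_, ?_⟩
  · intro s; rw [hVstar s, hπeq s]
  · intro π' hπ' Vπ' hVπ' s
    -- consider the minimum of D = Vstar - Vπ'
    obtain ⟨s0, _, hs0⟩ := Finset.exists_min_image Finset.univ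
      (fun s => Vstar s - Vπ' s) Finset.univ_nonempty
    have hmin : ∀ s, Vstar s0 - Vπ' s0 ≤ Vstar s - Vπ' s := fun s =>
      hs0 s (Finset.mem_univ s)
    set m := Vstar s0 - Vπ' s0 with hm
    have hsup : ∑ s', T s0 (π' s0) s' * Vstar s'
        ≤ (C s0).sup' (hC s0) fun a => ∑ s', T s0 a s' * Vstar s' :=
      Finset.le_sup' (fun a => ∑ s', T s0 a s' * Vstar s') (hπ' s0)
    have key : m ≥ γ * m := by
      have h1 : m ≥ γ * ∑ s', T s0 (π' s0) s' * (Vstar s' - Vπ' s') := by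
        have : Vstar s0 - Vπ' s0 ≥
            γ * (∑ s', T s0 (π' s0) s' * Vstar s' - ∑ s', T s0 (π' s0) s' * Vπ' s') := by
          rw [hVstar s0, hVπ' s0]
          have := mul_le_mul_of_nonneg_left hsup hγ0
          linarith
        calc m ≥ γ * (∑ s', T s0 (π' s0) s' * Vstar s' - ∑ s', T s0 (π' s0) s' * Vπ' s') := this
          _ = γ * ∑ s', T s0 (π' s0) s' * (Vstar s' - Vπ' s') := by
              rw [← Finset.sum_sub_distrib]; congr 1; apply Finset.sum_congr rfl; intros; ring
      have h2 : ∑ s', T s0 (π' s0) s' * (Vstar s' - Vπ' s')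
          ≥ ∑ s', T s0 (π' s0) s' * m := by
        apply Finset.sum_le_sum
        intro i _
        exact mul_le_mul_of_nonneg_left (hmin i) (hT0 _ _ _)
      have h3 : ∑ s', T s0 (π' s0) s' * m = m := by
        rw [← Finset.sum_mul, hT1, one_mul]
      have := mul_le_mul_of_nonneg_left (h3 ▸ h2) hγ0
      linarith
    have hm0 : 0 ≤ m := by nlinarith
    have := hmin s
    linarith
end

section
/- Let S be a finite nonempty type, A a finite nonempty type, and T : S → A → S → ℝ with T s a s' ≥ 0 and ∑_{s'} T s a s' = 1 for all s, a (a finite MDP), and let B ⊆ S. Let G be the monotone operator on functions S → [0,1] defined by (G y) s = 1 if s ∈ B and (G y) s = max_{a ∈ A} ∑_{s'} T s a s' * y s' otherwise, and let y* be its least fixed point. Then there exists a deterministic policy π : S → A such that the least fixed point of the induced-chain reachability operator F_π, defined by (F_π x) s = 1 if s ∈ B and (F_π x) s = ∑_{s'} T s (π s) s' * x s' otherwise, equals y* pointwise (the maximal reachability probabilities of an MDP are attained simultaneously at all states by a single memoryless deterministic policy). -/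
/-!
Kleene iteration from `0` (the operator `G` is monotone and continuous) shows that `y*` lies below
every prefixed point `G p ≤ p` in `[0, 1]`, not only below every fixed point.

Call an action greedy at `s` if it attains the maximum in `G y*` at `s`, and let `W` be the set of
states from which `B` is reached with positive probability using greedy actions only. Every state
with `y* s > 0` lies in `W`: otherwise `y*` scaled by some `c < 1` off `W` is a prefixed point below
`y*`, because greedy actions never enter `W` from outside and suboptimal ones lose a fixed positive
margin. Let `π` pick greedy actions that step closer to `B` inside `W`. For a fixed point `x` of
`F_π`, the difference `y* - x` is `π`-harmonic off `B` and vanishes on `B`; a positive maximum of it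
would be attained in `W`, and descending along `π` towards `B` forces it to be strictly smaller.
-/

open Finset Filter Topology Function

theorem exists_isFixedPt_between_of_le_map {α : Type*} [ConditionallyCompleteLattice α]
    [TopologicalSpace α] [SupConvergenceClass α] [T2Space α] {f : α → α} (hf : Monotone f)
    (hfc : Continuous f) {a b : α} (ha : a ≤ f a) (hab : a ≤ b) (hb : f b ≤ b) :
    ∃ z, IsFixedPt f z ∧ a ≤ z ∧ z ≤ b := by
  have hle : ∀ n, f^[n] a ≤ b := by
    intro n
    induction n with
    | zero => exact hab
    | succ n ih => exact (iterate_succ_apply' f n a ▸ hf ih).trans hb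
  have hbdd : BddAbove (Set.range fun n => f^[n] a) := ⟨b, Set.forall_mem_range.2 hle⟩
  refine ⟨⨆ n, f^[n] a, isFixedPt_of_tendsto_iterate (x := a) ?_ hfc.continuousAt,
    le_ciSup hbdd 0, ciSup_le hle⟩
  exact tendsto_atTop_ciSup (hf.monotone_iterate_of_le_map ha) hbdd

theorem eventually_forall_lt_mul_of_lt {ι : Type*} [Finite ι] (u v : ι → ℝ) :
    ∀ᶠ c in 𝓝 (1 : ℝ), ∀ i, u i < v i → u i < c * v i := by
  refine eventually_all.2 fun i => ?_
  by_cases h : u i < v i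
  · have : Tendsto (fun c : ℝ => c * v i) (𝓝 1) (𝓝 (v i)) := by
      simpa using (tendsto_id (x := 𝓝 (1 : ℝ))).mul_const (v i)
    exact (this.eventually (lt_mem_nhds h)).mono fun _ hc _ => hc
  · exact Eventually.of_forall fun _ h' => absurd h' h

namespace MDP

variable {S A : Type*} [Fintype S] (T : S → A → S → ℝ)

noncomputable def qVal (y : S → ℝ) (s : S) (a : A) : ℝ := ∑ s', T s a s' * y s'

theorem qVal_mono {T} (hT0 : ∀ s a s', 0 ≤ T s a s') {y z : S → ℝ} (h : y ≤ z) (s : S) (a : A) :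
    qVal T y s a ≤ qVal T z s a :=
  sum_le_sum fun s' _ => mul_le_mul_of_nonneg_left (h s') (hT0 s a s')

theorem qVal_sub (y z : S → ℝ) (s : S) (a : A) :
    qVal T (y - z) s a = qVal T y s a - qVal T z s a := by
  simp only [qVal, Pi.sub_apply, mul_sub, sum_sub_distrib]

variable [Fintype A] [Nonempty A]

def IsGreedy (y : S → ℝ) (s : S) (a : A) : Prop :=
  qVal T y s a = univ.sup' univ_nonempty (qVal T y s)

theorem qVal_le_sup' (y : S → ℝ) (s : S) (a : A) :
    qVal T y s a ≤ univ.sup' univ_nonempty (qVal T y s) :=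
  le_sup' _ (mem_univ a)

theorem exists_isGreedy (y : S → ℝ) (s : S) : ∃ a, IsGreedy T y s a := by
  obtain ⟨a, -, ha⟩ := exists_mem_eq_sup' univ_nonempty (qVal T y s)
  exact ⟨a, ha.symm⟩

variable (B : Set S)

def greedyAttractor (y : S → ℝ) : ℕ → Set S
  | 0 => B
  | n + 1 => B ∪ {s | ∃ a, IsGreedy T y s a ∧ ∃ s' ∈ greedyAttractor y n, 0 < T s a s'}

theorem greedyAttractor_mono (y : S → ℝ) : Monotone (greedyAttractor T B y) := by
  refine monotone_nat_of_le_succ fun n => ?_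
  induction n with
  | zero => exact Set.subset_union_left
  | succ n ih =>
    exact Set.union_subset_union_right _ fun s ⟨a, ha, s', hs', hT⟩ => ⟨a, ha, s', ih hs', hT⟩

theorem exists_greedy_policy_descending (y : S → ℝ) :
    ∃ π : S → A, (∀ s, IsGreedy T y s (π s)) ∧
      ∀ s n, s ∈ greedyAttractor T B y (n + 1) → s ∉ B →
        ∃ s' ∈ greedyAttractor T B y n, 0 < T s (π s) s' := by
  classical
  suffices h : ∀ s, ∃ a, IsGreedy T y s a ∧ ∀ n, s ∈ greedyAttractor T B y (n + 1) → s ∉ B →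
      ∃ s' ∈ greedyAttractor T B y n, 0 < T s a s' by
    choose π hπ using h
    exact ⟨π, fun s => (hπ s).1, fun s => (hπ s).2⟩
  intro s
  by_cases h : ∃ n, s ∈ greedyAttractor T B y (n + 1) ∧ s ∉ B
  · obtain ⟨hmem, hsB⟩ := Nat.find_spec h
    obtain ⟨a, ha, s', hs', hT⟩ := hmem.resolve_left hsB
    exact ⟨a, ha, fun n hn hnB =>
      ⟨s', greedyAttractor_mono T B y (Nat.find_min' h ⟨hn, hnB⟩) hs', hT⟩⟩
  · push Not at h
    obtain ⟨a, ha⟩ := exists_isGreedy T y s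
    exact ⟨a, ha, fun n hn hnB => absurd (h n hn) hnB⟩

variable [DecidablePred (· ∈ B)]

noncomputable def maxReachOp (y : S → ℝ) (s : S) : ℝ :=
  if s ∈ B then 1 else univ.sup' univ_nonempty (qVal T y s)

noncomputable def reachOp (π : S → A) (x : S → ℝ) (s : S) : ℝ :=
  if s ∈ B then 1 else qVal T x s (π s)

variable {T B}

theorem reachOp_eq_maxReachOp {y : S → ℝ} {π : S → A} (hπ : ∀ s, IsGreedy T y s (π s)) :
    reachOp T B π y = maxReachOp T B y := by
  ext s
  unfold reachOp maxReachOp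
  rw [hπ s]

theorem maxReachOp_mono (hT0 : ∀ s a s', 0 ≤ T s a s') : Monotone (maxReachOp T B) := by
  intro y z h s
  unfold maxReachOp
  split_ifs
  · exact le_rfl
  · exact sup'_le _ _ fun a _ => (qVal_mono hT0 h s a).trans (qVal_le_sup' T z s a)

theorem continuous_maxReachOp : Continuous (maxReachOp T B) := by
  refine continuous_pi fun s => ?_
  unfold maxReachOp
  split_ifs
  · exact continuous_const
  · refine Continuous.finset_sup'_apply _ fun a _ => ?_
    unfold qVal
    fun_prop

theorem le_of_maxReachOp_le (hT0 : ∀ s a s', 0 ≤ T s a s') {ystar : S → ℝ}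
    (hy_least : ∀ y : S → ℝ, (∀ s, y s ∈ Set.Icc (0 : ℝ) 1) →
      (∀ s, y s = maxReachOp T B y s) → ∀ s, ystar s ≤ y s)
    {p : S → ℝ} (hp0 : 0 ≤ p) (hp1 : p ≤ 1) (hp : maxReachOp T B p ≤ p) : ystar ≤ p := by
  have h0 : (0 : S → ℝ) ≤ maxReachOp T B 0 := fun s => by
    unfold maxReachOp
    split_ifs
    · exact zero_le_one
    · exact le_sup'_of_le _ (mem_univ (Classical.arbitrary A)) (by simp [qVal])
  obtain ⟨z, hz, hz0, hzp⟩ := exists_isFixedPt_between_of_le_map (maxReachOp_mono hT0)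
    continuous_maxReachOp h0 hp0 hp
  exact le_trans (hy_least z (fun s => ⟨hz0 s, (hzp.trans hp1) s⟩) fun s => (congrFun hz s).symm)
    hzp

theorem maxReachOp_le_self_of_scale_off (hT0 : ∀ s a s', 0 ≤ T s a s') {y y' : S → ℝ}
    (hy : ∀ s, y s = maxReachOp T B y s) {W : Set S} (hBW : B ⊆ W)
    (hW : ∀ s ∉ W, ∀ a, IsGreedy T y s a → ∀ s', 0 < T s a s' → s' ∉ W) {c : ℝ}
    (hgap : ∀ s a, qVal T y s a < y s → qVal T y s a < c * y s) (hy'y : y' ≤ y)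
    (hy'W : ∀ s ∈ W, y' s = y s) (hy'W' : ∀ s ∉ W, y' s = c * y s) :
    maxReachOp T B y' ≤ y' := by
  intro s
  by_cases hs : s ∈ W
  · rw [hy'W s hs, hy s]
    exact maxReachOp_mono hT0 hy'y s
  have hsB : s ∉ B := fun h => hs (hBW h)
  have hys : y s = univ.sup' univ_nonempty (qVal T y s) := by
    simpa only [maxReachOp, if_neg hsB] using hy s
  rw [hy'W' s hs, maxReachOp, if_neg hsB]
  refine sup'_le _ _ fun a _ => ?_
  by_cases ha : IsGreedy T y s a
  · -- greedy actions never enter `W` from outside, and off `W` we have `y' = c * y`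
    refine le_of_eq ?_
    calc qVal T y' s a = c * qVal T y s a := by
          rw [qVal, qVal, mul_sum]
          refine sum_congr rfl fun s' _ => ?_
          rcases (hT0 s a s').eq_or_lt with h0 | hpos
          · simp [← h0]
          · rw [hy'W' s' (hW s hs a ha s' hpos)]
            ring
      _ = c * y s := by rw [ha, hys]
  · have hlt : qVal T y s a < y s := hys ▸ lt_of_le_of_ne (qVal_le_sup' T y s a) ha
    exact (qVal_mono hT0 hy'y s a).trans (hgap s a hlt).le

theorem exists_mem_greedyAttractor_of_pos (hT0 : ∀ s a s', 0 ≤ T s a s') {ystar : S → ℝ}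
    (hy_mem : ∀ s, ystar s ∈ Set.Icc (0 : ℝ) 1) (hy_fix : ∀ s, ystar s = maxReachOp T B ystar s)
    (hy_least : ∀ y : S → ℝ, (∀ s, y s ∈ Set.Icc (0 : ℝ) 1) →
      (∀ s, y s = maxReachOp T B y s) → ∀ s, ystar s ≤ y s)
    {s : S} (hs : 0 < ystar s) : ∃ n, s ∈ greedyAttractor T B ystar n := by
  classical
  rw [← Set.mem_iUnion]
  set W := ⋃ n, greedyAttractor T B ystar n
  by_contra hsW
  have hW : ∀ t ∉ W, ∀ a, IsGreedy T ystar t a → ∀ t', 0 < T t a t' → t' ∉ W := by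
    intro t ht a ha t' hT ht'
    obtain ⟨n, hn⟩ := Set.mem_iUnion.1 ht'
    exact ht (Set.mem_iUnion.2 ⟨n + 1, Or.inr ⟨a, ha, t', hn, hT⟩⟩)
  obtain ⟨c, hgap, hc0, hc1⟩ := (((eventually_forall_lt_mul_of_lt
    (fun p : S × A => qVal T ystar p.1 p.2) (fun p => ystar p.1)).filter_mono
      nhdsWithin_le_nhds).and (Ioo_mem_nhdsLT zero_lt_one)).exists
  set y' : S → ℝ := fun t => if t ∈ W then ystar t else c * ystar t
  have hy'y : y' ≤ ystar := fun t => by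
    simp only [y']
    split_ifs
    · exact le_rfl
    · exact mul_le_of_le_one_left (hy_mem t).1 hc1.le
  have hy'0 : 0 ≤ y' := fun t => by
    simp only [y']
    split_ifs
    · exact (hy_mem t).1
    · exact mul_nonneg hc0.le (hy_mem t).1
  have hpre := maxReachOp_le_self_of_scale_off hT0 hy_fix
    (Set.subset_iUnion (greedyAttractor T B ystar) 0) hW (fun t a => hgap (t, a)) hy'y
    (fun t ht => if_pos ht) (fun t ht => if_neg ht)
  have hle := le_of_maxReachOp_le hT0 hy_least hy'0 (hy'y.trans fun t => (hy_mem t).2) hpre s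
  simp only [y', if_neg hsW] at hle
  exact (mul_lt_of_lt_one_left hs hc1).not_ge hle

theorem lt_of_mem_greedyAttractor (hT0 : ∀ s a s', 0 ≤ T s a s') (hT1 : ∀ s a, ∑ s', T s a s' = 1)
    {y d : S → ℝ} {π : S → A} {M : ℝ}
    (hπ : ∀ s n, s ∈ greedyAttractor T B y (n + 1) → s ∉ B →
      ∃ s' ∈ greedyAttractor T B y n, 0 < T s (π s) s')
    (hdM : ∀ s, d s ≤ M) (hdB : ∀ s ∈ B, d s < M) (hd : ∀ s ∉ B, d s = qVal T d s (π s)) :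
    ∀ n, ∀ s ∈ greedyAttractor T B y n, d s < M := by
  intro n
  induction n with
  | zero => exact hdB
  | succ n ih =>
    intro s hs
    by_cases hsB : s ∈ B
    · exact hdB s hsB
    obtain ⟨s', hs', hT⟩ := hπ s n hs hsB
    calc d s = ∑ t, T s (π s) t * d t := hd s hsB
      _ < ∑ t, T s (π s) t * M :=
        sum_lt_sum (fun t _ => mul_le_mul_of_nonneg_left (hdM t) (hT0 _ _ t))
          ⟨s', mem_univ _, mul_lt_mul_of_pos_left (ih s' hs') hT⟩
      _ = M := by rw [← sum_mul, hT1, one_mul]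

theorem le_of_eq_reachOp (hT0 : ∀ s a s', 0 ≤ T s a s') (hT1 : ∀ s a, ∑ s', T s a s' = 1)
    {ystar x : S → ℝ} {π : S → A} (hy : ∀ s, ystar s = reachOp T B π ystar s)
    (hπ : ∀ s n, s ∈ greedyAttractor T B ystar (n + 1) → s ∉ B →
      ∃ s' ∈ greedyAttractor T B ystar n, 0 < T s (π s) s')
    (hreach : ∀ s, 0 < ystar s → ∃ n, s ∈ greedyAttractor T B ystar n)
    (hx0 : 0 ≤ x) (hx : ∀ s, x s = reachOp T B π x s) : ystar ≤ x := by
  intro s₀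
  by_contra! h
  obtain ⟨t, -, ht⟩ := exists_max_image univ (ystar - x) ⟨s₀, mem_univ _⟩
  have hM : 0 < ystar t - x t := (sub_pos.2 h).trans_le (ht s₀ (mem_univ _))
  obtain ⟨n, hn⟩ := hreach t (hM.trans_le (sub_le_self _ (hx0 t)))
  refine (lt_of_mem_greedyAttractor hT0 hT1 hπ (fun s => ht s (mem_univ s)) ?_ ?_ n t hn).false
  · intro s hs
    rw [Pi.sub_apply, hy s, hx s]
    simpa [reachOp, hs] using hM
  · intro s hs
    rw [qVal_sub, Pi.sub_apply, hy s, hx s]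
    simp only [reachOp, if_neg hs]

end MDP

theorem exists_policy_attaining_max_reachability_general
    {S A : Type*} [Fintype S] [Fintype A] [Nonempty A]
    (T : S → A → S → ℝ)
    (hT0 : ∀ s a s', 0 ≤ T s a s')
    (hT1 : ∀ s a, ∑ s', T s a s' = 1)
    (B : Set S) [DecidablePred (· ∈ B)]
    (ystar : S → ℝ)
    (hy_mem : ∀ s, ystar s ∈ Set.Icc (0 : ℝ) 1)
    (hy_fix : ∀ s, ystar s =
      if s ∈ B then 1
      else Finset.univ.sup' Finset.univ_nonempty fun a => ∑ s', T s a s' * ystar s')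
    (hy_least : ∀ y : S → ℝ, (∀ s, y s ∈ Set.Icc (0 : ℝ) 1) →
      (∀ s, y s = if s ∈ B then 1
        else Finset.univ.sup' Finset.univ_nonempty fun a => ∑ s', T s a s' * y s') →
      ∀ s, ystar s ≤ y s) :
    ∃ π : S → A,
      (∀ s, ystar s = if s ∈ B then 1 else ∑ s', T s (π s) s' * ystar s') ∧
      (∀ x : S → ℝ, (∀ s, x s ∈ Set.Icc (0 : ℝ) 1) →
        (∀ s, x s = if s ∈ B then 1 else ∑ s', T s (π s) s' * x s') →
        ∀ s, ystar s ≤ x s) := by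
  obtain ⟨π, hgreedy, hdescend⟩ := MDP.exists_greedy_policy_descending T B ystar
  have hπ : ∀ s, ystar s = MDP.reachOp T B π ystar s := fun s =>
    (hy_fix s).trans (congrFun (MDP.reachOp_eq_maxReachOp hgreedy) s).symm
  have hreach := fun s (hs : 0 < ystar s) =>
    MDP.exists_mem_greedyAttractor_of_pos hT0 hy_mem hy_fix hy_least hs
  exact ⟨π, hπ, fun x hx hx_fix =>
    MDP.le_of_eq_reachOp hT0 hT1 hπ hdescend hreach (fun s => (hx s).1) hx_fix⟩

/-- The maximal reachability probabilities of a finite MDP (the least fixed point `y*`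
of the max-reachability operator `G`) are attained simultaneously at all states by a
single memoryless deterministic policy: there is a policy `π` such that `y*` is the
least fixed point of the reachability operator of the Markov chain induced by `π`. -/
theorem exists_policy_attaining_max_reachability
    {S A : Type*} [Fintype S] [Nonempty S] [Fintype A] [Nonempty A]
    (T : S → A → S → ℝ)
    (hT0 : ∀ s a s', 0 ≤ T s a s')
    (hT1 : ∀ s a, ∑ s', T s a s' = 1)
    (B : Set S) [DecidablePred (· ∈ B)]
    (ystar : S → ℝ)
    (hy_mem : ∀ s, ystar s ∈ Set.Icc (0 : ℝ) 1)
    (hy_fix : ∀ s, ystar s =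
      if s ∈ B then 1
      else Finset.univ.sup' Finset.univ_nonempty fun a => ∑ s', T s a s' * ystar s')
    (hy_least : ∀ y : S → ℝ, (∀ s, y s ∈ Set.Icc (0 : ℝ) 1) →
      (∀ s, y s = if s ∈ B then 1
        else Finset.univ.sup' Finset.univ_nonempty fun a => ∑ s', T s a s' * y s') →
      ∀ s, ystar s ≤ y s) :
    ∃ π : S → A,
      (∀ s, ystar s = if s ∈ B then 1 else ∑ s', T s (π s) s' * ystar s') ∧
      (∀ x : S → ℝ, (∀ s, x s ∈ Set.Icc (0 : ℝ) 1) →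
        (∀ s, x s = if s ∈ B then 1 else ∑ s', T s (π s) s' * x s') →
        ∀ s, ystar s ≤ x s) :=
  exists_policy_attaining_max_reachability_general T hT0 hT1 B ystar hy_mem hy_fix hy_least
end
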